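/- arXiv:2605.04979 — 4 statements merged into one kernel-verified Lean document; each statement's English description precedes it below -/
import Mathlib

section
/- In the episode model, if the collection of indicator variables {B(σ,i) : σ ∈ Σ, 1 ≤ i ≤ n(σ)} contains at least two variables, then this collection is negative cylinder dependent (NCD). -/
/-!
Outcomes of different episodes are independent, so both cylinder inequalities factor over
episodes and need only be checked inside a single episode `t`. There the events `{O t = some σ}`
for distinct `σ` are pairwise disjoint, with probabilities `p σ` say: two or more of them never
occur together, and the probability of avoiding all of them is `1 - ∑ p σ ≤ ∏ (1 - p σ)`.
-/

open MeasureTheory ProbabilityTheory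

/-- A family of Bernoulli ({0,1}-valued) random variables is *negative cylinder
dependent* (NCD) if for every finite subset `S` of indices,
`P(∩_{i∈S} {Z_i = 1}) ≤ Π_{i∈S} P(Z_i = 1)` and
`P(∩_{i∈S} {Z_i = 0}) ≤ Π_{i∈S} P(Z_i = 0)`. -/
def NCD {Ω ι : Type*} [MeasurableSpace Ω] (μ : Measure Ω) (Z : ι → Ω → ℝ) : Prop :=
  ∀ S : Finset ι,
    μ (⋂ i ∈ S, {ω | Z i ω = 1}) ≤ ∏ i ∈ S, μ {ω | Z i ω = 1} ∧
    μ (⋂ i ∈ S, {ω | Z i ω = 0}) ≤ ∏ i ∈ S, μ {ω | Z i ω = 0}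

/-- Episode model: `B(σ,t)` is the indicator of the event that episode `t`
(one on which `σ` is in play) results in outcome `σ`. -/
noncomputable def Bvar {Ω Sig : Type*} {Tn : ℕ} (O : Fin Tn → Ω → Option Sig)
    (σ : Sig) (t : Fin Tn) (ω : Ω) : ℝ :=
  @ite _ (O t ω = some σ) (Classical.dec _) 1 0

namespace MeasureTheory

variable {Ω ι : Type*} [MeasurableSpace Ω] {μ : Measure Ω} [IsProbabilityMeasure μ]

theorem measure_diff_le_measure_compl_mul {E G : Set Ω} (hE : MeasurableSet E) (hEG : E ⊆ G) :
    μ (G \ E) ≤ μ Eᶜ * μ G := by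
  rw [measure_sdiff hEG hE.nullMeasurableSet (measure_ne_top μ E), prob_compl_eq_one_sub hE,
    ENNReal.sub_mul fun _ _ => measure_ne_top μ G, one_mul]
  exact tsub_le_tsub_left (mul_le_of_le_one_right' prob_le_one) _

theorem measure_biInter_le_prod_of_pairwiseDisjoint {E : ι → Set Ω} {F : Finset ι}
    (hE : (F : Set ι).PairwiseDisjoint E) :
    μ (⋂ i ∈ F, E i) ≤ ∏ i ∈ F, μ (E i) := by
  rcases F.eq_empty_or_nonempty with rfl | hF
  · simp
  obtain ⟨a, rfl⟩ | ⟨a, ha, b, hb, hab⟩ := hF.exists_eq_singleton_or_nontrivial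
  · simp
  have hempty : ⋂ i ∈ F, E i = ∅ :=
    Set.subset_empty_iff.mp fun ω hω =>
      (hE ha hb hab).le_bot ⟨Set.mem_iInter₂.mp hω a ha, Set.mem_iInter₂.mp hω b hb⟩
  simp [hempty]

theorem measure_biInter_compl_le_prod_of_pairwiseDisjoint {E : ι → Set Ω} {F : Finset ι}
    (hE : (F : Set ι).PairwiseDisjoint E) (hEm : ∀ i ∈ F, MeasurableSet (E i)) :
    μ (⋂ i ∈ F, (E i)ᶜ) ≤ ∏ i ∈ F, μ (E i)ᶜ := by
  classical
  induction F using Finset.induction_on with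
  | empty => simp
  | @insert a F ha ih =>
    have hsub : E a ⊆ ⋂ i ∈ F, (E i)ᶜ := fun ω hω => Set.mem_iInter₂.mpr fun i hi =>
      Set.disjoint_left.mp (hE (by simp) (by simp [hi]) (ne_of_mem_of_not_mem hi ha).symm) hω
    rw [Finset.set_biInter_insert, Set.inter_comm, ← Set.sdiff_eq, Finset.prod_insert ha]
    calc μ ((⋂ i ∈ F, (E i)ᶜ) \ E a) ≤ μ (E a)ᶜ * μ (⋂ i ∈ F, (E i)ᶜ) :=
          measure_diff_le_measure_compl_mul (hEm a (by simp)) hsub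
      _ ≤ μ (E a)ᶜ * ∏ i ∈ F, μ (E i)ᶜ := by
          gcongr
          exact ih (hE.subset (by simp)) fun i hi => hEm i (by simp [hi])

end MeasureTheory

namespace ProbabilityTheory

open MeasureTheory

variable {Ω κ ι β : Type*} [MeasurableSpace Ω] {μ : Measure Ω} {mβ : MeasurableSpace β}
  [DecidableEq κ]

theorem iIndepFun.measure_biInter_preimage_le_prod {X : κ → Ω → β} (hX : iIndepFun X μ)
    (π : ι → κ) {c : ι → Set β} (hc : ∀ i, MeasurableSet (c i)) (S : Finset ι)
    (hfibre : ∀ k (F : Finset ι), (∀ i ∈ F, π i = k) →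
      μ (⋂ i ∈ F, X k ⁻¹' c i) ≤ ∏ i ∈ F, μ (X k ⁻¹' c i)) :
    μ (⋂ i ∈ S, X (π i) ⁻¹' c i) ≤ ∏ i ∈ S, μ (X (π i) ⁻¹' c i) := by
  have hgroup : ⋂ i ∈ S, X (π i) ⁻¹' c i
      = ⋂ k ∈ S.image π, X k ⁻¹' ⋂ i ∈ {j ∈ S | π j = k}, c i := by
    ext ω
    simp only [Set.mem_iInter, Set.mem_preimage, Finset.mem_image, Finset.mem_filter]
    exact ⟨fun h k _ i ⟨hi, hik⟩ => hik ▸ h i hi,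
      fun h i hi => h (π i) ⟨i, hi, rfl⟩ i ⟨hi, rfl⟩⟩
  rw [hgroup,
    hX.meas_biInter fun k _ => ⟨_, Finset.measurableSet_biInter _ fun i _ => hc i, rfl⟩,
    ← Finset.prod_fiberwise_of_maps_to fun i hi => Finset.mem_image_of_mem π hi]
  refine Finset.prod_le_prod' fun k _ => ?_
  have hπ : ∀ i ∈ {j ∈ S | π j = k}, π i = k := fun i hi => (Finset.mem_filter.mp hi).2
  rw [Set.preimage_iInter₂]
  exact (hfibre k _ hπ).trans_eq (Finset.prod_congr rfl fun i hi => by rw [hπ i hi])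

end ProbabilityTheory

theorem setOf_Bvar_eq_one {Ω Sig : Type*} {Tn : ℕ} (O : Fin Tn → Ω → Option Sig) (σ : Sig)
    (t : Fin Tn) : {ω | Bvar O σ t ω = 1} = O t ⁻¹' {some σ} := by
  ext ω
  by_cases h : O t ω = some σ <;> simp [Bvar, h]

theorem setOf_Bvar_eq_zero {Ω Sig : Type*} {Tn : ℕ} (O : Fin Tn → Ω → Option Sig) (σ : Sig)
    (t : Fin Tn) : {ω | Bvar O σ t ω = 0} = O t ⁻¹' {some σ}ᶜ := by
  ext ω
  by_cases h : O t ω = some σ <;> simp [Bvar, h]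

theorem episode_Bvars_NCD_general
    {Ω : Type*} [MeasurableSpace Ω] (μ : Measure Ω) [IsProbabilityMeasure μ]
    {Sig : Type*}
    (Tn : ℕ)
    (A : Fin Tn → Finset Sig)
    (O : Fin Tn → Ω → Option Sig)
    (hOmeas : ∀ t, @Measurable Ω (Option Sig) _ ⊤ (O t))
    (hOindep : iIndepFun (m := fun _ : Fin Tn => (⊤ : MeasurableSpace (Option Sig))) O μ) :
    NCD μ (fun pr : {pr : Sig × Fin Tn // pr.1 ∈ A pr.2} =>
      Bvar O pr.1.1 pr.1.2) := by
  have hdisj : ∀ t, Set.PairwiseDisjoint {i : {pr : Sig × Fin Tn // pr.1 ∈ A pr.2} | i.1.2 = t}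
      fun i => O t ⁻¹' {some i.1.1} := by
    rintro t i (hi : i.1.2 = t) j (hj : j.1.2 = t) hij
    refine Disjoint.preimage _ (Set.disjoint_singleton.mpr fun hσ => hij ?_)
    exact Subtype.ext (Prod.ext (Option.some.inj hσ) (hi.trans hj.symm))
  intro S
  constructor
  · simp only [setOf_Bvar_eq_one]
    exact hOindep.measure_biInter_preimage_le_prod _ (fun _ => trivial) S fun t _ hF =>
      measure_biInter_le_prod_of_pairwiseDisjoint ((hdisj t).subset hF)
  · simp only [setOf_Bvar_eq_zero]
    exact hOindep.measure_biInter_preimage_le_prod _ (fun _ => trivial) S fun t _ hF =>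
      measure_biInter_compl_le_prod_of_pairwiseDisjoint ((hdisj t).subset hF)
        fun _ _ => hOmeas t trivial

/-- In the episode model, if the collection of indicator variables
`{B(σ,i) : σ ∈ Σ, 1 ≤ i ≤ n(σ)}` (indexed equivalently by the pairs `(σ,t)` with
`σ ∈ A_t`) contains at least two variables, then this collection is negative cylinder
dependent (NCD). -/
theorem episode_Bvars_NCD
    {Ω : Type*} [MeasurableSpace Ω] (μ : Measure Ω) [IsProbabilityMeasure μ]
    {Sig : Type*} [Fintype Sig] [DecidableEq Sig]
    (q : Sig → ℝ) (hq : ∀ σ, 0 ≤ q σ ∧ q σ ≤ 1)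
    (Tn : ℕ) (hT : 1 ≤ Tn)
    (A : Fin Tn → Finset Sig)
    (hA : ∀ t, ∑ σ ∈ A t, q σ ≤ 1)
    (O : Fin Tn → Ω → Option Sig)
    (hOmeas : ∀ t, @Measurable Ω (Option Sig) _ ⊤ (O t))
    (hOindep : iIndepFun (m := fun _ : Fin Tn => (⊤ : MeasurableSpace (Option Sig))) O μ)
    (hsupp : ∀ (t : Fin Tn) (σ : Sig), σ ∉ A t → μ {ω | O t ω = some σ} = 0)
    (hdist : ∀ (t : Fin Tn), ∀ σ ∈ A t,
      μ {ω | O t ω = some σ} = ENNReal.ofReal (q σ))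
    (hnone : ∀ t : Fin Tn,
      μ {ω | O t ω = none} = ENNReal.ofReal (1 - ∑ σ ∈ A t, q σ))
    (hcard : 2 ≤ Fintype.card {pr : Sig × Fin Tn // pr.1 ∈ A pr.2}) :
    NCD μ (fun pr : {pr : Sig × Fin Tn // pr.1 ∈ A pr.2} =>
      Bvar O pr.1.1 pr.1.2) :=
  episode_Bvars_NCD_general μ Tn A O hOmeas hOindep
end

section
/- Let Z₁,…,Z_m be negative cylinder dependent (NCD) Bernoulli random variables and let Z⁰₁,…,Z⁰_m be mutually independent Bernoulli random variables with P(Z⁰_i = 1) = P(Z_i = 1) for each i. Then for all nonnegative weights w₁,…,w_m and every λ ∈ ℝ, the moment generating functions satisfy E[exp(λ Σ_{i=1}^m w_i Z_i)] ≤ E[exp(λ Σ_{i=1}^m w_i Z⁰_i)] = Π_{i=1}^m E[exp(λ w_i Z⁰_i)]. -/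
open MeasureTheory ProbabilityTheory

open Finset

/-!
For a `{0,1}`-valued variable, `exp (s * x) = 1 + (exp s - 1) * x`, so for `λ ≥ 0` the exponential
`exp (λ ∑ wᵢ Zᵢ)` is `∏ (1 + cᵢ Zᵢ)` with `cᵢ = exp (λ wᵢ) - 1 ≥ 0`. Expanding the product, its
expectation is `∑_S (∏_{i ∈ S} cᵢ) P(Zᵢ = 1 for all i ∈ S)`, which the upper NCD inequalities bound
termwise by the same expansion of `∏ (1 + cᵢ pᵢ) = ∏ E[exp (λ wᵢ Zᵢ)]`. For `λ < 0` apply this to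
the family `1 - Zᵢ`, which is NCD with the roles of `0` and `1` exchanged. The one-variable
expectations only depend on `pᵢ`, and independence factorises the expectation for the twin.
-/

section Bernoulli

variable {Ω ι : Type*}

lemma Real.exp_mul_eq_one_add_of_bernoulli {x : ℝ} (hx : x = 0 ∨ x = 1) (s : ℝ) :
    Real.exp (s * x) = 1 + (Real.exp s - 1) * x := by
  rcases hx with rfl | rfl <;> simp

lemma eq_indicator_of_bernoulli {X : Ω → ℝ} (hX : ∀ ω, X ω = 0 ∨ X ω = 1) (ω : Ω) :
    X ω = {ω | X ω = 1}.indicator 1 ω := by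
  rcases hX ω with h | h <;> simp [h]

lemma prod_eq_indicator_iInter_of_bernoulli {T : ι → Ω → ℝ} (hT : ∀ i ω, T i ω = 0 ∨ T i ω = 1)
    (S : Finset ι) (ω : Ω) :
    ∏ i ∈ S, T i ω = (⋂ i ∈ S, {ω | T i ω = 1}).indicator 1 ω := by
  calc ∏ i ∈ S, T i ω = ∏ i ∈ S, {ω | T i ω = 1}.indicator 1 ω :=
        prod_congr rfl fun i _ => eq_indicator_of_bernoulli (hT i) ω
    _ = _ := by simp [prod_indicator_apply]

variable [MeasurableSpace Ω] {μ : Measure Ω}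

lemma integral_exp_mul_of_bernoulli [IsProbabilityMeasure μ] {X : Ω → ℝ} (hXm : Measurable X)
    (hX : ∀ ω, X ω = 0 ∨ X ω = 1) (s : ℝ) :
    ∫ ω, Real.exp (s * X ω) ∂μ = 1 + (Real.exp s - 1) * μ.real {ω | X ω = 1} := by
  have hmeas : MeasurableSet {ω | X ω = 1} := hXm (measurableSet_singleton 1)
  have hexp : ∀ ω, Real.exp (s * X ω) = 1 + (Real.exp s - 1) * {ω | X ω = 1}.indicator 1 ω :=
    fun ω => by
      rw [Real.exp_mul_eq_one_add_of_bernoulli (hX ω), ← eq_indicator_of_bernoulli hX]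
  rw [integral_congr_ae (.of_forall hexp),
    integral_add (integrable_const 1) (((integrable_const 1).indicator hmeas).const_mul _),
    integral_const_mul, integral_indicator_one hmeas]
  simp

lemma measurableSet_iInter_eq_one {T : ι → Ω → ℝ} (hTm : ∀ i, Measurable (T i)) (S : Finset ι) :
    MeasurableSet (⋂ i ∈ S, {ω | T i ω = 1}) :=
  .biInter S.countable_toSet fun i _ => hTm i (measurableSet_singleton 1)

lemma integrable_prod_of_bernoulli [IsFiniteMeasure μ] {T : ι → Ω → ℝ}
    (hTm : ∀ i, Measurable (T i)) (hT : ∀ i ω, T i ω = 0 ∨ T i ω = 1) (S : Finset ι) :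
    Integrable (fun ω => ∏ i ∈ S, T i ω) μ := by
  simp_rw [prod_eq_indicator_iInter_of_bernoulli hT S]
  exact (integrable_const 1).indicator (measurableSet_iInter_eq_one hTm S)

lemma integral_prod_le_prod_measureReal_of_bernoulli [IsFiniteMeasure μ] {T : ι → Ω → ℝ}
    (hTm : ∀ i, Measurable (T i)) (hT : ∀ i ω, T i ω = 0 ∨ T i ω = 1) (S : Finset ι)
    (hcyl : μ (⋂ i ∈ S, {ω | T i ω = 1}) ≤ ∏ i ∈ S, μ {ω | T i ω = 1}) :
    ∫ ω, ∏ i ∈ S, T i ω ∂μ ≤ ∏ i ∈ S, μ.real {ω | T i ω = 1} := by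
  simp_rw [prod_eq_indicator_iInter_of_bernoulli hT S,
    integral_indicator_one (measurableSet_iInter_eq_one hTm S), measureReal_def,
    ← ENNReal.toReal_prod]
  exact ENNReal.toReal_mono (ENNReal.prod_ne_top fun i _ => measure_ne_top μ _) hcyl

lemma integral_prod_one_add_mul_le [IsFiniteMeasure μ] [Fintype ι] {T : ι → Ω → ℝ}
    (hTm : ∀ i, Measurable (T i)) (hT : ∀ i ω, T i ω = 0 ∨ T i ω = 1)
    (hcyl : ∀ S : Finset ι, μ (⋂ i ∈ S, {ω | T i ω = 1}) ≤ ∏ i ∈ S, μ {ω | T i ω = 1})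
    {c : ι → ℝ} (hc : ∀ i, 0 ≤ c i) :
    ∫ ω, ∏ i, (1 + c i * T i ω) ∂μ ≤ ∏ i, (1 + c i * μ.real {ω | T i ω = 1}) := by
  simp_rw [prod_one_add, prod_mul_distrib]
  rw [integral_finsetSum _ fun S _ => (integrable_prod_of_bernoulli hTm hT S).const_mul _]
  refine sum_le_sum fun S _ => ?_
  rw [integral_const_mul]
  exact mul_le_mul_of_nonneg_left (integral_prod_le_prod_measureReal_of_bernoulli hTm hT S (hcyl S))
    (prod_nonneg fun i _ => hc i)

lemma integral_exp_sum_le_prod_of_cylinder [IsProbabilityMeasure μ] [Fintype ι]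
    {T : ι → Ω → ℝ} (hTm : ∀ i, Measurable (T i)) (hT : ∀ i ω, T i ω = 0 ∨ T i ω = 1)
    (hcyl : ∀ S : Finset ι, μ (⋂ i ∈ S, {ω | T i ω = 1}) ≤ ∏ i ∈ S, μ {ω | T i ω = 1})
    {w : ι → ℝ} (hw : ∀ i, 0 ≤ w i) {t : ℝ} (ht : 0 ≤ t) :
    ∫ ω, Real.exp (t * ∑ i, w i * T i ω) ∂μ ≤ ∏ i, ∫ ω, Real.exp (t * (w i * T i ω)) ∂μ := by
  have hexp : ∀ ω, Real.exp (t * ∑ i, w i * T i ω) = ∏ i, (1 + (Real.exp (t * w i) - 1) * T i ω) :=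
    fun ω => by
      simp only [mul_sum, Real.exp_sum, ← mul_assoc]
      exact prod_congr rfl fun i _ => Real.exp_mul_eq_one_add_of_bernoulli (hT i ω) _
  simp_rw [integral_congr_ae (.of_forall hexp), ← mul_assoc,
    integral_exp_mul_of_bernoulli (hTm _) (hT _)]
  exact integral_prod_one_add_mul_le hTm hT hcyl fun i =>
    sub_nonneg.2 (Real.one_le_exp (mul_nonneg ht (hw i)))

end Bernoulli

lemma NCD.one_sub {Ω ι : Type*} [MeasurableSpace Ω] {μ : Measure Ω} {Z : ι → Ω → ℝ}
    (h : NCD μ Z) : NCD μ fun i ω => 1 - Z i ω := by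
  intro S
  simp only [sub_eq_self, sub_eq_zero, eq_comm (a := (1 : ℝ))]
  exact (h S).symm

theorem NCD.integral_exp_sum_le_prod {Ω ι : Type*} [MeasurableSpace Ω] {μ : Measure Ω}
    [IsProbabilityMeasure μ] [Fintype ι] {Z : ι → Ω → ℝ} (h : NCD μ Z)
    (hZm : ∀ i, Measurable (Z i)) (hZ : ∀ i ω, Z i ω = 0 ∨ Z i ω = 1)
    {w : ι → ℝ} (hw : ∀ i, 0 ≤ w i) (lam : ℝ) :
    ∫ ω, Real.exp (lam * ∑ i, w i * Z i ω) ∂μ ≤ ∏ i, ∫ ω, Real.exp (lam * (w i * Z i ω)) ∂μ := by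
  rcases le_or_gt 0 lam with hlam | hlam
  · exact integral_exp_sum_le_prod_of_cylinder hZm hZ (fun S => (h S).1) hw hlam
  have hZm' : ∀ i, Measurable fun ω => 1 - Z i ω := fun i => measurable_const.sub (hZm i)
  have hZ' : ∀ i ω, 1 - Z i ω = 0 ∨ 1 - Z i ω = 1 := fun i ω => by
    rcases hZ i ω with hz | hz <;> simp [hz]
  calc ∫ ω, Real.exp (lam * ∑ i, w i * Z i ω) ∂μ
      = Real.exp (lam * ∑ i, w i) * ∫ ω, Real.exp (-lam * ∑ i, w i * (1 - Z i ω)) ∂μ := by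
        rw [← integral_const_mul]
        congr 1 with ω
        rw [← Real.exp_add]
        simp only [mul_sub, mul_one, sum_sub_distrib]
        ring_nf
    _ ≤ Real.exp (lam * ∑ i, w i) * ∏ i, ∫ ω, Real.exp (-lam * (w i * (1 - Z i ω))) ∂μ := by
        gcongr
        exact integral_exp_sum_le_prod_of_cylinder hZm' hZ' (fun S => (h.one_sub S).1) hw
          (neg_nonneg.2 hlam.le)
    _ = ∏ i, ∫ ω, Real.exp (lam * (w i * Z i ω)) ∂μ := by
        rw [mul_sum, Real.exp_sum, ← prod_mul_distrib]
        refine prod_congr rfl fun i _ => ?_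
        rw [← integral_const_mul]
        congr 1 with ω
        rw [← Real.exp_add]
        ring_nf

theorem ncd_mgf_le_independent_twin_general
    {Ω : Type*} [MeasurableSpace Ω] (μ : Measure Ω) [IsProbabilityMeasure μ]
    {Ω₂ : Type*} [MeasurableSpace Ω₂] (μ₂ : Measure Ω₂) [IsProbabilityMeasure μ₂]
    (m : ℕ)
    (Z : Fin m → Ω → ℝ)
    (hZmeas : ∀ i, Measurable (Z i))
    (hZ01 : ∀ (i : Fin m) (ω : Ω), Z i ω = 0 ∨ Z i ω = 1)
    (hNCD : NCD μ Z)
    (Z₀ : Fin m → Ω₂ → ℝ)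
    (hZ₀meas : ∀ i, Measurable (Z₀ i))
    (hZ₀01 : ∀ (i : Fin m) (ω : Ω₂), Z₀ i ω = 0 ∨ Z₀ i ω = 1)
    (hZ₀indep : iIndepFun Z₀ μ₂)
    (hsame : ∀ i, μ₂ {ω | Z₀ i ω = 1} = μ {ω | Z i ω = 1})
    (w : Fin m → ℝ) (hw : ∀ i, 0 ≤ w i) (lam : ℝ) :
    (∫ ω, Real.exp (lam * ∑ i, w i * Z i ω) ∂μ
        ≤ ∫ ω, Real.exp (lam * ∑ i, w i * Z₀ i ω) ∂μ₂) ∧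
    (∫ ω, Real.exp (lam * ∑ i, w i * Z₀ i ω) ∂μ₂
        = ∏ i, ∫ ω, Real.exp (lam * (w i * Z₀ i ω)) ∂μ₂) := by
  have hfactor : ∫ ω, Real.exp (lam * ∑ i, w i * Z₀ i ω) ∂μ₂
      = ∏ i, ∫ ω, Real.exp (lam * (w i * Z₀ i ω)) ∂μ₂ := by
    have hindep : iIndepFun (fun i ω => w i * Z₀ i ω) μ₂ :=
      hZ₀indep.comp (fun i x => w i * x) fun i => measurable_const_mul _
    simpa [mgf, Finset.sum_apply] using
      hindep.mgf_sum (t := lam) (fun i => (hZ₀meas i).const_mul (w i)) univ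
  have hsame_mgf : ∀ i, ∫ ω, Real.exp (lam * (w i * Z i ω)) ∂μ
      = ∫ ω, Real.exp (lam * (w i * Z₀ i ω)) ∂μ₂ := fun i => by
    simp_rw [← mul_assoc, integral_exp_mul_of_bernoulli (hZmeas i) (hZ01 i),
      integral_exp_mul_of_bernoulli (hZ₀meas i) (hZ₀01 i), measureReal_def, hsame i]
  refine ⟨?_, hfactor⟩
  calc ∫ ω, Real.exp (lam * ∑ i, w i * Z i ω) ∂μ
      ≤ ∏ i, ∫ ω, Real.exp (lam * (w i * Z i ω)) ∂μ :=
        hNCD.integral_exp_sum_le_prod hZmeas hZ01 hw lam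
    _ = ∫ ω, Real.exp (lam * ∑ i, w i * Z₀ i ω) ∂μ₂ :=
        (prod_congr rfl fun i _ => hsame_mgf i).trans hfactor.symm

/-- Let `Z₁,…,Z_m` be NCD Bernoulli random variables and let
`Z⁰₁,…,Z⁰_m` be mutually independent Bernoulli random variables (on a possibly
different probability space) with `P(Z⁰_i = 1) = P(Z_i = 1)` for each `i`.  Then for
all nonnegative weights `w₁,…,w_m` and every `λ ∈ ℝ`,
`E[exp(λ Σ_i w_i Z_i)] ≤ E[exp(λ Σ_i w_i Z⁰_i)] = Π_i E[exp(λ w_i Z⁰_i)]`. -/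
theorem ncd_mgf_le_independent_twin
    {Ω : Type*} [MeasurableSpace Ω] (μ : Measure Ω) [IsProbabilityMeasure μ]
    {Ω₂ : Type*} [MeasurableSpace Ω₂] (μ₂ : Measure Ω₂) [IsProbabilityMeasure μ₂]
    (m : ℕ) (hm : 2 ≤ m)
    (Z : Fin m → Ω → ℝ)
    (hZmeas : ∀ i, Measurable (Z i))
    (hZ01 : ∀ (i : Fin m) (ω : Ω), Z i ω = 0 ∨ Z i ω = 1)
    (hNCD : NCD μ Z)
    (Z₀ : Fin m → Ω₂ → ℝ)
    (hZ₀meas : ∀ i, Measurable (Z₀ i))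
    (hZ₀01 : ∀ (i : Fin m) (ω : Ω₂), Z₀ i ω = 0 ∨ Z₀ i ω = 1)
    (hZ₀indep : iIndepFun Z₀ μ₂)
    (hsame : ∀ i, μ₂ {ω | Z₀ i ω = 1} = μ {ω | Z i ω = 1})
    (w : Fin m → ℝ) (hw : ∀ i, 0 ≤ w i) (lam : ℝ) :
    (∫ ω, Real.exp (lam * ∑ i, w i * Z i ω) ∂μ
        ≤ ∫ ω, Real.exp (lam * ∑ i, w i * Z₀ i ω) ∂μ₂) ∧
    (∫ ω, Real.exp (lam * ∑ i, w i * Z₀ i ω) ∂μ₂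
        = ∏ i, ∫ ω, Real.exp (lam * (w i * Z₀ i ω)) ∂μ₂) :=
  ncd_mgf_le_independent_twin_general μ μ₂ m Z hZmeas hZ01 hNCD Z₀ hZ₀meas hZ₀01 hZ₀indep hsame w hw
    lam
end

section
/- Let Σ be a finite nonempty set, q : Σ → [0,1] with Σ_{σ∈Σ} q(σ) ≤ 1, ρ : Σ → [0,1], and integers n(σ) ≥ 1 for each σ ∈ Σ; set n_min = min_{σ∈Σ} n(σ). Let {B₀(σ,i) : σ ∈ Σ, 1 ≤ i ≤ n(σ)} be mutually independent Bernoulli random variables with E[B₀(σ,i)] = q(σ), and define V̂₀ = Σ_{σ∈Σ} (ρ(σ)/n(σ)) Σ_{i=1}^{n(σ)} B₀(σ,i) and V = Σ_{σ∈Σ} ρ(σ)·q(σ). Then for every ε ∈ (0,1], P(V̂₀ ≥ V + ε) ≤ exp(−(3/8)·n_min·ε²) and P(V̂₀ ≤ V − ε) ≤ exp(−(3/8)·n_min·ε²). -/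
open MeasureTheory ProbabilityTheory

lemma exp_quad_bound {u : ℝ} (hu : |u| ≤ 3/4) : Real.exp u - 1 - u ≤ (2/3) * u ^ 2 := by
  have h := Real.exp_bound (x := u) (by linarith) (n := 3) (by norm_num)
  have hsum : ∑ m ∈ Finset.range 3, u ^ m / m.factorial = 1 + u + u ^ 2 / 2 := by
    norm_num [Finset.sum_range_succ]
  rw [hsum] at h
  have h1 : Real.exp u - (1 + u + u ^ 2 / 2) ≤ |u| ^ 3 * (4 / (6 * 3)) := by
    have := (abs_sub_le_iff.1 h).1
    norm_num at this ⊢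
    convert this using 2
  have h2 : |u| ^ 3 ≤ u ^ 2 * (3/4) := by
    have : |u| ^ 3 = u ^ 2 * |u| := by rw [← sq_abs]; ring
    rw [this]
    have : (0:ℝ) ≤ u ^ 2 := sq_nonneg u
    nlinarith
  nlinarith

/-- Let `Σ` be a finite nonempty set, `q : Σ → [0,1]` with
`Σ_σ q(σ) ≤ 1`, `ρ : Σ → [0,1]`, and integers `n(σ) ≥ 1`; set
`n_min = min_σ n(σ)`.  Let `{B₀(σ,i) : σ ∈ Σ, 1 ≤ i ≤ n(σ)}` be mutually independent
Bernoulli random variables with `E[B₀(σ,i)] = q(σ)`, and define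
`V̂₀ = Σ_σ (ρ(σ)/n(σ)) Σ_{i=1}^{n(σ)} B₀(σ,i)` and `V = Σ_σ ρ(σ)·q(σ)`.
Then for every `ε ∈ (0,1]`,
`P(V̂₀ ≥ V + ε) ≤ exp(−(3/8)·n_min·ε²)` and `P(V̂₀ ≤ V − ε) ≤ exp(−(3/8)·n_min·ε²)`. -/
theorem twin_estimator_bernstein_bound
    {Ω : Type*} [MeasurableSpace Ω] (μ : Measure Ω) [IsProbabilityMeasure μ]
    {Sig : Type*} [Fintype Sig] [Nonempty Sig] [DecidableEq Sig]
    (q : Sig → ℝ) (hq : ∀ σ, 0 ≤ q σ ∧ q σ ≤ 1)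
    (hqsum : ∑ σ : Sig, q σ ≤ 1)
    (ρ : Sig → ℝ) (hρ : ∀ σ, 0 ≤ ρ σ ∧ ρ σ ≤ 1)
    (n : Sig → ℕ) (hn : ∀ σ, 1 ≤ n σ)
    (B₀ : ((σ : Sig) × Fin (n σ)) → Ω → ℝ)
    (hB₀meas : ∀ j, Measurable (B₀ j))
    (hB₀01 : ∀ (j : (σ : Sig) × Fin (n σ)) (ω : Ω), B₀ j ω = 0 ∨ B₀ j ω = 1)
    (hB₀mean : ∀ j : (σ : Sig) × Fin (n σ), ∫ ω, B₀ j ω ∂μ = q j.1)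
    (hB₀indep : iIndepFun B₀ μ)
    (ε : ℝ) (hε : 0 < ε) (hε1 : ε ≤ 1) :
    μ {ω | ∑ σ : Sig, (ρ σ / (n σ : ℝ)) * ∑ i : Fin (n σ), B₀ ⟨σ, i⟩ ω
          ≥ (∑ σ : Sig, ρ σ * q σ) + ε}
        ≤ ENNReal.ofReal
            (Real.exp (-(3 / 8) * ((Finset.univ.inf' Finset.univ_nonempty n : ℕ) : ℝ) * ε ^ 2)) ∧
    μ {ω | ∑ σ : Sig, (ρ σ / (n σ : ℝ)) * ∑ i : Fin (n σ), B₀ ⟨σ, i⟩ ω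
          ≤ (∑ σ : Sig, ρ σ * q σ) - ε}
        ≤ ENNReal.ofReal
            (Real.exp (-(3 / 8) * ((Finset.univ.inf' Finset.univ_nonempty n : ℕ) : ℝ) * ε ^ 2)) := by
  classical
  set m : ℕ := Finset.univ.inf' Finset.univ_nonempty n with hm_def
  have hmle : ∀ σ, m ≤ n σ := fun σ => Finset.inf'_le _ (Finset.mem_univ σ)
  have hm1 : 1 ≤ m := Finset.le_inf' _ _ fun σ _ => hn σ
  have hmR : (0:ℝ) < (m : ℝ) := by exact_mod_cast hm1
  have hnR : ∀ σ, (0:ℝ) < (n σ : ℝ) := fun σ => by exact_mod_cast hn σ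
  set c : ((σ : Sig) × Fin (n σ)) → ℝ := fun j => ρ j.1 / (n j.1 : ℝ) with hc_def
  have hc0 : ∀ j, 0 ≤ c j := fun j => div_nonneg (hρ j.1).1 (hnR j.1).le
  have hcm : ∀ j, c j * m ≤ 1 := by
    intro j
    have h1 : c j * m ≤ c j * n j.1 :=
      mul_le_mul_of_nonneg_left (by exact_mod_cast hmle j.1) (hc0 j)
    have h2 : c j * n j.1 = ρ j.1 := div_mul_cancel₀ _ (hnR j.1).ne'
    linarith [(hρ j.1).2]
  set X : ((σ : Sig) × Fin (n σ)) → Ω → ℝ := fun j ω => c j * (B₀ j ω - q j.1) with hX_def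
  have hXmeas : ∀ j, Measurable (X j) := fun j => ((hB₀meas j).sub_const _).const_mul _
  have hXindep : iIndepFun X μ :=
    hB₀indep.comp (fun j x => c j * (x - q j.1))
      (fun j => (measurable_id.sub_const _).const_mul _)
  have hB₀int : ∀ j, Integrable (B₀ j) μ := by
    intro j
    refine (integrable_const (1:ℝ)).mono' (hB₀meas j).aestronglyMeasurable ?_
    refine ae_of_all _ fun ω => ?_
    rcases hB₀01 j ω with h | h <;> simp [h]
  -- pointwise decomposition of exp (t * X j ω)
  have hexp_eq : ∀ (j) (t : ℝ) (ω),
      Real.exp (t * X j ω)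
        = Real.exp (-(t * c j * q j.1)) * ((Real.exp (t * c j) - 1) * B₀ j ω + 1) := by
    intro j t ω
    rcases hB₀01 j ω with h | h
    · simp [hX_def, h]
      ring_nf
    · rw [hX_def]
      simp only [h]
      have h2 : (Real.exp (t * c j) - 1) * 1 + 1 = Real.exp (t * c j) := by ring
      rw [h2, ← Real.exp_add]
      ring_nf
  have hXint : ∀ (j) (t : ℝ), Integrable (fun ω => Real.exp (t * X j ω)) μ := by
    intro j t
    have : Integrable (fun ω =>
        Real.exp (-(t * c j * q j.1)) * ((Real.exp (t * c j) - 1) * B₀ j ω + 1)) μ :=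
      ((((hB₀int j).const_mul _).add (integrable_const 1)).const_mul _)
    exact this.congr (ae_of_all _ fun ω => (hexp_eq j t ω).symm)
  have hmgf_eq : ∀ (j) (t : ℝ),
      mgf (X j) μ t
        = Real.exp (-(t * c j * q j.1)) * ((Real.exp (t * c j) - 1) * q j.1 + 1) := by
    intro j t
    show (∫ ω, Real.exp (t * X j ω) ∂μ) = _
    rw [integral_congr_ae (ae_of_all _ fun ω => hexp_eq j t ω), integral_const_mul,
      integral_add ((hB₀int j).const_mul _) (integrable_const 1), integral_const_mul,
      hB₀mean j, integral_const]
    simp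
  -- key mgf bound per variable
  have hψ : ∀ t : ℝ, 0 ≤ Real.exp (t / m) - 1 - t / m := by
    intro t; linarith [Real.add_one_le_exp (t / m)]
  have hmgf_le : ∀ (j) (t : ℝ),
      mgf (X j) μ t
        ≤ Real.exp (q j.1 * (c j * m) * (Real.exp (t / m) - 1 - t / m)) := by
    intro j t
    rw [hmgf_eq j t]
    have hq0 := (hq j.1).1
    have hq1 := (hq j.1).2
    -- step 1: ≤ exp (q (e^{tc} - 1 - tc))
    have h1 : (Real.exp (t * c j) - 1) * q j.1 + 1
        ≤ Real.exp (q j.1 * (Real.exp (t * c j) - 1)) := by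
      have := Real.add_one_le_exp (q j.1 * (Real.exp (t * c j) - 1))
      linarith
    have h2 : Real.exp (-(t * c j * q j.1)) * ((Real.exp (t * c j) - 1) * q j.1 + 1)
        ≤ Real.exp (q j.1 * (Real.exp (t * c j) - 1 - t * c j)) := by
      calc Real.exp (-(t * c j * q j.1)) * ((Real.exp (t * c j) - 1) * q j.1 + 1)
          ≤ Real.exp (-(t * c j * q j.1)) * Real.exp (q j.1 * (Real.exp (t * c j) - 1)) := by
            have hpos : (0:ℝ) < Real.exp (-(t * c j * q j.1)) := Real.exp_pos _
            nlinarith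
        _ = Real.exp (q j.1 * (Real.exp (t * c j) - 1 - t * c j)) := by
            rw [← Real.exp_add]; ring_nf
    refine h2.trans (Real.exp_le_exp.2 ?_)
    -- step 2: convexity: e^{tc} - 1 - tc ≤ λ (e^{t/m} - 1 - t/m), λ = c m
    set lam : ℝ := c j * m with hlam
    have hlam0 : 0 ≤ lam := mul_nonneg (hc0 j) hmR.le
    have hlam1 : lam ≤ 1 := hcm j
    have hconv : Real.exp (t * c j) ≤ (1 - lam) * 1 + lam * Real.exp (t / m) := by
      have h := convexOn_exp.2 (Set.mem_univ (0:ℝ)) (Set.mem_univ (t / m))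
        (by linarith : (0:ℝ) ≤ 1 - lam) hlam0 (by ring)
      have harg : (1 - lam) • (0:ℝ) + lam • (t / m) = t * c j := by
        simp only [smul_eq_mul, hlam, mul_zero, zero_add]
        field_simp
      rw [harg] at h
      simpa [Real.exp_zero] using h
    have hkey : Real.exp (t * c j) - 1 - t * c j
        ≤ lam * (Real.exp (t / m) - 1 - t / m) := by
      have htc : t * c j = lam * (t / m) := by
        rw [hlam]; field_simp
      rw [htc] at hconv ⊢
      linarith
    have := mul_le_mul_of_nonneg_left hkey hq0
    linarith
  -- sum of the exponents
  have hsumlam : ∑ j : (σ : Sig) × Fin (n σ), q j.1 * (c j * m) ≤ m := by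
    have hstep : ∀ σ : Sig, ∑ i : Fin (n σ), q σ * (c ⟨σ, i⟩ * m) = m * (ρ σ * q σ) := by
      intro σ
      have heq : ∀ i : Fin (n σ), q σ * (c ⟨σ, i⟩ * m) = q σ * (ρ σ / (n σ : ℝ) * m) :=
        fun i => rfl
      rw [Finset.sum_congr rfl fun i _ => heq i, Finset.sum_const, Finset.card_univ,
        Fintype.card_fin, nsmul_eq_mul]
      field_simp [(hnR σ).ne']
    calc ∑ j : (σ : Sig) × Fin (n σ), q j.1 * (c j * m)
        = ∑ σ : Sig, ∑ i : Fin (n σ), q σ * (c ⟨σ, i⟩ * m) := by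
          rw [← Finset.univ_sigma_univ, Finset.sum_sigma]
      _ = m * ∑ σ : Sig, ρ σ * q σ := by rw [Finset.sum_congr rfl fun σ _ => hstep σ,
            ← Finset.mul_sum]
      _ ≤ m * 1 := by
          refine mul_le_mul_of_nonneg_left ?_ hmR.le
          refine le_trans (Finset.sum_le_sum fun σ _ => ?_) hqsum
          nlinarith [(hρ σ).1, (hρ σ).2, (hq σ).1]
      _ = m := mul_one _
  -- mgf of the sum
  set S : Ω → ℝ := ∑ j : (σ : Sig) × Fin (n σ), X j with hS_def
  have hSint : ∀ t : ℝ, Integrable (fun ω => Real.exp (t * S ω)) μ := fun t =>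
    hXindep.integrable_exp_mul_sum hXmeas (fun j _ => hXint j t)
  have hSmgf : ∀ t : ℝ, mgf S μ t
      ≤ Real.exp ((m : ℝ) * (Real.exp (t / m) - 1 - t / m)) := by
    intro t
    rw [hS_def, hXindep.mgf_sum hXmeas]
    calc ∏ j : (σ : Sig) × Fin (n σ), mgf (X j) μ t
        ≤ ∏ j : (σ : Sig) × Fin (n σ),
            Real.exp (q j.1 * (c j * m) * (Real.exp (t / m) - 1 - t / m)) := by
          refine Finset.prod_le_prod (fun j _ => mgf_nonneg) (fun j _ => hmgf_le j t)
      _ = Real.exp (∑ j : (σ : Sig) × Fin (n σ),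
            q j.1 * (c j * m) * (Real.exp (t / m) - 1 - t / m)) := by
          rw [Real.exp_sum]
      _ ≤ Real.exp ((m : ℝ) * (Real.exp (t / m) - 1 - t / m)) := by
          rw [Real.exp_le_exp, ← Finset.sum_mul]
          exact mul_le_mul_of_nonneg_right hsumlam (hψ t)
  -- relate S to the statement's sums
  have hSval : ∀ ω, S ω
      = (∑ σ : Sig, (ρ σ / (n σ : ℝ)) * ∑ i : Fin (n σ), B₀ ⟨σ, i⟩ ω)
        - ∑ σ : Sig, ρ σ * q σ := by
    intro ω
    rw [hS_def]
    simp only [Finset.sum_apply]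
    rw [← Finset.univ_sigma_univ, Finset.sum_sigma, ← Finset.sum_sub_distrib]
    refine Finset.sum_congr rfl fun σ _ => ?_
    rw [hX_def]
    simp only [hc_def]
    rw [← Finset.mul_sum, Finset.sum_sub_distrib, Finset.sum_const, Finset.card_univ,
      Fintype.card_fin, nsmul_eq_mul]
    field_simp [(hnR σ).ne']
  -- the generic tail bound
  have tail : ∀ t ε₀ : ℝ, -(t / m) * ε₀ + (Real.exp (t / m) - 1 - t / m) ≤ -(3/8) * ε ^ 2 →
      Real.exp (-t * ε₀) * mgf S μ t
        ≤ Real.exp (-(3 / 8) * (m : ℝ) * ε ^ 2) := by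
    intro t ε₀ ht
    calc Real.exp (-t * ε₀) * mgf S μ t
        ≤ Real.exp (-t * ε₀) * Real.exp ((m : ℝ) * (Real.exp (t / m) - 1 - t / m)) :=
          mul_le_mul_of_nonneg_left (hSmgf t) (Real.exp_pos _).le
      _ = Real.exp ((m : ℝ) * (-(t / m) * ε₀ + (Real.exp (t / m) - 1 - t / m))) := by
          rw [← Real.exp_add]
          congr 1
          field_simp
      _ ≤ Real.exp (-(3 / 8) * (m : ℝ) * ε ^ 2) := by
          rw [Real.exp_le_exp]
          calc (m : ℝ) * (-(t / m) * ε₀ + (Real.exp (t / m) - 1 - t / m))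
              ≤ (m : ℝ) * (-(3/8) * ε ^ 2) := mul_le_mul_of_nonneg_left ht hmR.le
            _ = -(3 / 8) * (m : ℝ) * ε ^ 2 := by ring
  constructor
  · -- upper tail, t = (3/4) ε m
    set t : ℝ := (3/4) * ε * m with ht_def
    have htm : t / m = (3/4) * ε := by field_simp [ht_def]; ring
    have hset : {ω | ∑ σ : Sig, (ρ σ / (n σ : ℝ)) * ∑ i : Fin (n σ), B₀ ⟨σ, i⟩ ω
          ≥ (∑ σ : Sig, ρ σ * q σ) + ε} = {ω | ε ≤ S ω} := by
      ext ω
      simp only [Set.mem_setOf_eq, ge_iff_le, hSval ω]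
      constructor <;> intro h <;> linarith
    rw [hset]
    have hcher := measure_ge_le_exp_mul_mgf (μ := μ) (X := S) ε
      (by positivity : (0:ℝ) ≤ t) (hSint t)
    rw [ENNReal.le_ofReal_iff_toReal_le (measure_ne_top _ _) (Real.exp_pos _).le]
    refine hcher.trans (tail t ε ?_)
    rw [htm]
    have hquad : Real.exp ((3/4) * ε) - 1 - (3/4) * ε ≤ (2/3) * ((3/4) * ε) ^ 2 := by
      apply exp_quad_bound
      rw [abs_of_nonneg (by positivity)]
      linarith
    nlinarith
  · -- lower tail, t = -(3/4) ε m
    set t : ℝ := -((3/4) * ε * m) with ht_def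
    have htm : t / m = -((3/4) * ε) := by field_simp [ht_def]; ring
    have hset : {ω | ∑ σ : Sig, (ρ σ / (n σ : ℝ)) * ∑ i : Fin (n σ), B₀ ⟨σ, i⟩ ω
          ≤ (∑ σ : Sig, ρ σ * q σ) - ε} = {ω | S ω ≤ -ε} := by
      ext ω
      simp only [Set.mem_setOf_eq, hSval ω]
      constructor <;> intro h <;> linarith
    rw [hset]
    have hcher := measure_le_le_exp_mul_mgf (μ := μ) (X := S) (-ε)
      (by rw [ht_def]; exact neg_nonpos.mpr (by positivity) : t ≤ 0) (hSint t)
    rw [ENNReal.le_ofReal_iff_toReal_le (measure_ne_top _ _) (Real.exp_pos _).le]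
    refine hcher.trans (tail t (-ε) ?_)
    rw [htm]
    have hquad : Real.exp (-((3/4) * ε)) - 1 - (-((3/4) * ε)) ≤ (2/3) * (-((3/4) * ε)) ^ 2 := by
      apply exp_quad_bound
      rw [abs_of_nonpos (by linarith)]
      linarith
    nlinarith
end

section
/- In a T-MDP, let p̂ be any family of empirical transition probabilities (for each non-terminal state s and action a, p̂(s,a,·) is a probability distribution over the children of s), let V̂(π) denote the value of policy π at the root computed via the Bellman recursion with p̂ in place of p, let n : Σ → ℕ assign a positive count n(σ) ≥ 1 to each leaf σ, and let β be any nonincreasing real-valued function on positive integers. Then the maximal upper confidence bound over all deterministic policies decomposes over leaves: max_π [V̂(π) + β(min_{σ∈X(π)} n(σ))] = max_{σ∈Σ} [max_{π∈Y(σ)} V̂(π) + β(n(σ))]. -/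
/-!
A Tree MDP (T-MDP): a finite rooted tree whose internal nodes are the non-terminal
states `S`, whose leaves are the terminal states `T`, with actions `A`.
-/
structure TMDP (S T A : Type) [Fintype S] [Fintype T] [Fintype A]
    [DecidableEq S] [DecidableEq T] [DecidableEq A] where
  root : S
  parent : S ⊕ T → S
  act : S ⊕ T → A
  depth : S ⊕ T → ℕ
  p : S ⊕ T → ℝ
  r : S ⊕ T → ℝ
  γ : ℝ
  γ_nonneg : 0 ≤ γ
  γ_le_one : γ ≤ 1
  p_nonneg : ∀ n, 0 ≤ p n
  depth_eq_zero_iff : ∀ n, depth n = 0 ↔ n = Sum.inl root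
  depth_parent : ∀ n, n ≠ Sum.inl root → depth n = depth (Sum.inl (parent n)) + 1
  p_sum : ∀ (s : S) (a : A),
    ∑ n ∈ Finset.univ.filter
        (fun n : S ⊕ T => parent n = s ∧ act n = a ∧ n ≠ Sum.inl root), p n = 1

namespace TMDP

variable {S T A : Type} [Fintype S] [Fintype T] [Fintype A]
  [DecidableEq S] [DecidableEq T] [DecidableEq A]

/-- One step up the tree (towards the root). -/
def up (M : TMDP S T A) (n : S ⊕ T) : S ⊕ T := Sum.inl (M.parent n)

/-- A policy `π` is consistent with a node `n` if `π` takes the action following each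
state on the unique path from the root to `n`. -/
def consistent (M : TMDP S T A) (π : S → A) (n : S ⊕ T) : Prop :=
  ∀ k < M.depth n, π (M.parent (M.up^[k] n)) = M.act (M.up^[k] n)

/-- `X(π)`: the set of terminal states (leaves) consistent with policy `π`. -/
noncomputable def Xset (M : TMDP S T A) (π : S → A) : Finset T :=
  @Finset.filter _ (fun σ : T => M.consistent π (Sum.inr σ))
    (Classical.decPred _) Finset.univ

/-- `Y(σ)`: the set of deterministic policies consistent with the leaf `σ`. -/
noncomputable def Yset (M : TMDP S T A) (σ : T) : Finset (S → A) :=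
  @Finset.filter _ (fun π : S → A => M.consistent π (Sum.inr σ))
    (Classical.decPred _) Finset.univ

end TMDP

/- Both sides equal the maximum of `V a + β (n i)` over related pairs `i ∈ X a`: on the left,
since `β` is antitone, `β` of the minimum count over `X a` is the largest `β (n i)`. -/
theorem Finset.sup'_add_inf'_eq_sup'_sup'_add
    {α ι κ R : Type*} [Fintype α] [Fintype ι] [Nonempty α] [Nonempty ι] [LinearOrder κ]
    [LinearOrder R] [Add R] [AddLeftMono R] [AddRightMono R]
    (X : α → Finset ι) (Y : ι → Finset α) (hXY : ∀ a i, i ∈ X a ↔ a ∈ Y i)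
    (hX : ∀ a, (X a).Nonempty) (hY : ∀ i, (Y i).Nonempty)
    (V : α → R) (n : ι → κ) (β : κ → R) (hβ : AntitoneOn β (Set.range n)) :
    univ.sup' univ_nonempty (fun a => V a + β ((X a).inf' (hX a) n))
      = univ.sup' univ_nonempty (fun i => (Y i).sup' (hY i) V + β (n i)) := by
  apply le_antisymm
  · refine sup'_le _ _ fun a _ => ?_
    obtain ⟨i, hi, hmin⟩ := exists_mem_eq_inf' (hX a) n
    calc V a + β ((X a).inf' (hX a) n)
        = V a + β (n i) := by rw [hmin]
      _ ≤ (Y i).sup' (hY i) V + β (n i) :=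
          add_le_add_left (le_sup' V ((hXY a i).1 hi)) _
      _ ≤ _ := le_sup' (fun i => (Y i).sup' (hY i) V + β (n i)) (mem_univ i)
  · refine sup'_le _ _ fun i _ => ?_
    obtain ⟨a, ha, hmax⟩ := exists_mem_eq_sup' (hY i) V
    obtain ⟨j, -, hmin⟩ := exists_mem_eq_inf' (hX a) n
    have hβ_le : β (n i) ≤ β ((X a).inf' (hX a) n) :=
      hβ (hmin ▸ Set.mem_range_self j) (Set.mem_range_self i)
        (inf'_le n ((hXY a i).2 ha))
    calc (Y i).sup' (hY i) V + β (n i)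
        = V a + β (n i) := by rw [hmax]
      _ ≤ V a + β ((X a).inf' (hX a) n) := add_le_add_right hβ_le _
      _ ≤ _ := le_sup' (fun a => V a + β ((X a).inf' (hX a) n)) (mem_univ a)

namespace TMDP

variable {S T A : Type} [Fintype S] [Fintype T] [Fintype A]
  [DecidableEq S] [DecidableEq T] [DecidableEq A]

theorem mem_Xset_iff_mem_Yset (M : TMDP S T A) (π : S → A) (σ : T) :
    σ ∈ M.Xset π ↔ π ∈ M.Yset σ := by
  simp [Xset, Yset]

end TMDP

theorem tmdp_max_ucb_decomposes_over_leaves_general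
    {S T A : Type} [Fintype S] [Fintype T] [Fintype A]
    [DecidableEq S] [DecidableEq T] [DecidableEq A]
    [Nonempty A] [Nonempty T]
    (M : TMDP S T A)
    (Vhat : (S → A) → (S ⊕ T) → ℝ)
    (n : T → ℕ) (hn : ∀ σ, 1 ≤ n σ)
    (β : ℕ → ℝ)
    (hβ : ∀ m₁ m₂ : ℕ, 1 ≤ m₁ → m₁ ≤ m₂ → β m₂ ≤ β m₁)
    (hX : ∀ π : S → A, (M.Xset π).Nonempty)
    (hY : ∀ σ : T, (M.Yset σ).Nonempty) :
    Finset.univ.sup' Finset.univ_nonempty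
        (fun π : S → A =>
          Vhat π (Sum.inl M.root) + β ((M.Xset π).inf' (hX π) n))
      = Finset.univ.sup' Finset.univ_nonempty
          (fun σ : T =>
            (M.Yset σ).sup' (hY σ) (fun π => Vhat π (Sum.inl M.root)) + β (n σ)) :=
  Finset.sup'_add_inf'_eq_sup'_sup'_add M.Xset M.Yset M.mem_Xset_iff_mem_Yset hX hY
    (fun π => Vhat π (Sum.inl M.root)) n β
    (by rintro _ ⟨σ, rfl⟩ _ - h; exact hβ _ _ (hn σ) h)

/-- In a T-MDP, let `p̂` be any family of empirical transition
probabilities, let `V̂(π)` be the value of policy `π` at the root computed via the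
Bellman recursion with `p̂` in place of `p`, let `n : Σ → ℕ` assign a positive count to
each leaf, and let `β` be any nonincreasing real-valued function on positive integers.
Then the maximal upper confidence bound over all deterministic policies decomposes over
leaves:
`max_π [V̂(π) + β(min_{σ∈X(π)} n(σ))] = max_{σ∈Σ} [max_{π∈Y(σ)} V̂(π) + β(n(σ))]`. -/
theorem tmdp_max_ucb_decomposes_over_leaves
    {S T A : Type} [Fintype S] [Fintype T] [Fintype A]
    [DecidableEq S] [DecidableEq T] [DecidableEq A]
    [Nonempty A] [Nonempty T]
    (M : TMDP S T A)
    (phat : (S ⊕ T) → ℝ)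
    (hphat_nonneg : ∀ n, 0 ≤ phat n)
    (hphat_sum : ∀ (s : S) (a : A),
      ∑ n ∈ Finset.univ.filter
          (fun n : S ⊕ T => M.parent n = s ∧ M.act n = a ∧ n ≠ Sum.inl M.root),
        phat n = 1)
    (Vhat : (S → A) → (S ⊕ T) → ℝ)
    (hVhat_leaf : ∀ (π : S → A) (σ : T), Vhat π (Sum.inr σ) = 0)
    (hVhat_bellman : ∀ (π : S → A) (s : S),
      Vhat π (Sum.inl s) =
        ∑ n ∈ Finset.univ.filter
            (fun n : S ⊕ T => M.parent n = s ∧ M.act n = π s ∧ n ≠ Sum.inl M.root),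
          phat n * (M.r n + M.γ * Vhat π n))
    (n : T → ℕ) (hn : ∀ σ, 1 ≤ n σ)
    (β : ℕ → ℝ)
    (hβ : ∀ m₁ m₂ : ℕ, 1 ≤ m₁ → m₁ ≤ m₂ → β m₂ ≤ β m₁)
    (hX : ∀ π : S → A, (M.Xset π).Nonempty)
    (hY : ∀ σ : T, (M.Yset σ).Nonempty) :
    Finset.univ.sup' Finset.univ_nonempty
        (fun π : S → A =>
          Vhat π (Sum.inl M.root) + β ((M.Xset π).inf' (hX π) n))
      = Finset.univ.sup' Finset.univ_nonempty
          (fun σ : T =>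
            (M.Yset σ).sup' (hY σ) (fun π => Vhat π (Sum.inl M.root)) + β (n σ)) :=
  tmdp_max_ucb_decomposes_over_leaves_general M Vhat n hn β hβ hX hY
end
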